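/- Let B2 be a unital C*-subalgebra of M_N, let B be a unital C*-subalgebra of M_N, and suppose Y(B2;B) = { u ∈ U(M_N) : u*Bu ⊆ B2 } is nonempty. Consider the action of the group Stab(M_N,B) × U(B2) on Y(B2;B) given by (w,v)·u = w u v*, where Stab(M_N,B) = { w ∈ U(M_N) : wBw* = B }. Then this action has only finitely many orbits; more precisely, the map sending the orbit of u to the ∼_{B2}-equivalence class of u*Bu is a well-defined injection from the set of orbits into the (finite) set of ∼_{B2}-equivalence classes of unital C*-subalgebras of B2. -/

import Mathlib

/-!
The orbit of `u` is determined by `u* B u` up to unitary conjugation in `B2`: if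
`v (u* B u) v* = u'* B u'`, then `w = u' v u*` normalizes `B` and `u' = w u v*`.

For finiteness, let `E` be the trace-preserving conditional expectation onto `B2`. For
`t, u ∈ Y`, `x = E(t* u) ∈ B2` intertwines `b ↦ u* b u` with `b ↦ t* b t` because `E` is a
`B2`-bimodule map; if `x` is invertible, its polar unitary `x |x|⁻¹ ∈ B2` intertwines them too, so
`u` lies in the orbit of `t`. As `E(t* t) = 1`, this happens for all `u` near `t`, and compactness
of `Y` leaves finitely many orbits.
-/

set_option synthInstance.maxHeartbeats 1000000
set_option maxHeartbeats 1000000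

noncomputable section

abbrev MatN (N : ℕ) := Matrix (Fin N) (Fin N) ℂ

/-- `Y(B2;B) = { u ∈ U(M_N) : u* B u ⊆ B2 }`. -/
def Yset {N : ℕ} (B2 B : StarSubalgebra ℂ (MatN N)) : Set (MatN N) :=
  {u | u ∈ unitary (MatN N) ∧ ∀ b ∈ B, star u * b * u ∈ B2}

/-- The orbit relation on `Y(B2;B)` for the action of `Stab(M_N,B) × U(B2)` given by
`(w,v)·u = w u v*`. -/
def orbitRel {N : ℕ} (B2 B : StarSubalgebra ℂ (MatN N)) (u u' : MatN N) : Prop :=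
  ∃ w v : MatN N, w ∈ unitary (MatN N) ∧
    ((fun x => w * x * star w) '' (B : Set (MatN N)) = (B : Set (MatN N))) ∧
    v ∈ unitary (MatN N) ∧ v ∈ B2 ∧ u' = w * u * star v

/-- `∼_{B2}`-equivalence of the subalgebras `u* B u` and `u'* B u'` of `B2`. -/
def imagesEquiv {N : ℕ} (B2 B : StarSubalgebra ℂ (MatN N)) (u u' : MatN N) : Prop :=
  ∃ v : MatN N, v ∈ unitary (MatN N) ∧ v ∈ B2 ∧
    (fun x => v * x * star v) '' ((fun x => star u * x * u) '' (B : Set (MatN N))) =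
      (fun x => star u' * x * u') '' (B : Set (MatN N))

namespace Unitary

variable {R : Type*} [Monoid R] [StarMul R] {U : R}

lemma star_mul_self_mul_of_mem (hU : U ∈ unitary R) (a : R) : star U * (U * a) = a := by
  rw [← mul_assoc, star_mul_self_of_mem hU, one_mul]

lemma mul_star_self_mul_of_mem (hU : U ∈ unitary R) (a : R) : U * (star U * a) = a := by
  rw [← mul_assoc, mul_star_self_of_mem hU, one_mul]

end Unitary

open scoped InnerProductSpace Topology

section Polar

variable {A : Type*} [CStarAlgebra A] [PartialOrder A] [StarOrderedRing A]

open CFC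

lemma CFC.rpow_mem {S : StarSubalgebra ℂ A} [IsClosed (S : Set A)] {a : A} (ha : a ∈ S)
    (ha₀ : 0 ≤ a) (r : ℝ) : a ^ r ∈ S := by
  rw [rpow_eq_cfc_real ha₀]
  exact cfc_mem (𝕜' := ℂ) _ ha

lemma Commute.cfcRpow_right {a b : A} (h : Commute a b) (r : ℝ) : Commute a (b ^ r) :=
  (h.symm.cfc_nnreal _).symm

/-- The unitary factor `x |x|⁻¹` of the polar decomposition of an invertible `x`. -/
def polarUnitary (x : A) : A := x * (star x * x) ^ (-(1 / 2) : ℝ)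

lemma IsUnit.polarUnitary_mem_unitary {x : A} (hx : IsUnit x) : polarUnitary x ∈ unitary A := by
  have hpos : IsStrictlyPositive (star x * x) :=
    CStarAlgebra.isStrictlyPositive_iff_eq_star_mul_self.mpr ⟨x, hx, rfl⟩
  set s := (star x * x) ^ (-(1 / 2) : ℝ)
  have hs : star s = s := rpow_nonneg.isSelfAdjoint
  refine (hx.mul (IsStrictlyPositive.rpow _ _ hpos).isUnit).mem_unitary_iff_star_mul_self.mpr ?_
  calc star (x * s) * (x * s) = s * (star x * x) ^ (1 : ℝ) * s := by
        rw [star_mul, hs, rpow_one _ hpos.nonneg, mul_assoc, mul_assoc, mul_assoc]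
    _ = (star x * x) ^ (-(1 / 2) + 1 + -(1 / 2) : ℝ) := by
        rw [rpow_add hpos.isUnit, rpow_add hpos.isUnit]
    _ = 1 := by norm_num [rpow_zero _ hpos.nonneg]

lemma polarUnitary_mem {S : StarSubalgebra ℂ A} [IsClosed (S : Set A)] {x : A} (hx : x ∈ S) :
    polarUnitary x ∈ S :=
  mul_mem hx <| CFC.rpow_mem (mul_mem (star_mem hx) hx) (star_mul_self_nonneg x) _

lemma polarUnitary_intertwines {x a b : A} (h₁ : a * x = x * b) (h₂ : star a * x = x * star b) :
    a * polarUnitary x = polarUnitary x * b := by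
  have hb : Commute b (star x * x) := by
    have h₃ : star x * a = b * star x := by simpa using congrArg star h₂
    change b * (star x * x) = star x * x * b
    rw [← mul_assoc, ← h₃, mul_assoc, h₁, mul_assoc]
  rw [polarUnitary, ← mul_assoc, h₁, mul_assoc, mul_assoc, (hb.cfcRpow_right _).eq]

end Polar

lemma isCompact_unitary {A : Type*} [NormedRing A] [StarRing A] [CStarRing A] [ProperSpace A] :
    IsCompact (unitary A : Set A) :=
  Metric.isCompact_of_isClosed_isBounded isClosed_unitary <|
    isBounded_iff_forall_norm_le.mpr ⟨‖(1 : A)‖, fun _ hU => by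
      simpa using (CStarRing.norm_mem_unitary_mul (1 : A) hU).le⟩

namespace Matrix

variable {n : Type*} [Fintype n]

def toEuclideanEntries : Matrix n n ℂ ≃ₗ[ℂ] EuclideanSpace ℂ (n × n) where
  toFun m := WithLp.toLp 2 fun p => m p.1 p.2
  invFun v := Matrix.of fun i j => v (i, j)
  map_add' _ _ := rfl
  map_smul' _ _ := rfl
  left_inv _ := rfl
  right_inv _ := rfl

lemma inner_toEuclideanEntries (a b : Matrix n n ℂ) :
    ⟪toEuclideanEntries a, toEuclideanEntries b⟫_ℂ = trace (star a * b) := by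
  simp only [PiLp.inner_apply, RCLike.inner_apply, trace, diag, mul_apply, star_apply,
    Fintype.sum_prod_type, toEuclideanEntries, RCLike.star_def]
  rw [Finset.sum_comm]
  exact Finset.sum_congr rfl fun _ _ => Finset.sum_congr rfl fun _ _ => mul_comm _ _

variable [DecidableEq n]

/-- The trace-preserving conditional expectation onto `S`. -/
def traceCondExp (S : StarSubalgebra ℂ (Matrix n n ℂ)) : Matrix n n ℂ →ₗ[ℂ] Matrix n n ℂ :=
  toEuclideanEntries.symm.toLinearMap ∘ₗ
    (S.toSubalgebra.toSubmodule.map toEuclideanEntries.toLinearMap).starProjection.toLinearMap ∘ₗ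
      toEuclideanEntries.toLinearMap

variable {S : StarSubalgebra ℂ (Matrix n n ℂ)} {m y : Matrix n n ℂ}

lemma traceCondExp_eq_iff :
    traceCondExp S m = y ↔ y ∈ S ∧ ∀ c ∈ S, trace (star (m - y) * c) = 0 := by
  set K := S.toSubalgebra.toSubmodule.map (toEuclideanEntries (n := n)).toLinearMap
  have hK : ∀ y, toEuclideanEntries y ∈ K ↔ y ∈ S := fun y => by simp [K]
  have hE : traceCondExp S m = y ↔ K.starProjection (toEuclideanEntries m) = toEuclideanEntries y :=
    toEuclideanEntries.symm_apply_eq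
  rw [hE]
  constructor
  · intro h
    refine ⟨(hK y).mp (h ▸ K.starProjection_apply_mem _), fun c hc => ?_⟩
    have := K.starProjection_inner_eq_zero (toEuclideanEntries m) _ ((hK c).mpr hc)
    rwa [h, ← map_sub, inner_toEuclideanEntries] at this
  · rintro ⟨hy, horth⟩
    refine K.eq_starProjection_of_mem_of_inner_eq_zero ((hK y).mpr hy) ?_
    intro w hw
    obtain ⟨c, hc, rfl⟩ := Submodule.mem_map.mp hw
    rw [← map_sub, LinearEquiv.coe_coe, inner_toEuclideanEntries]
    exact horth c hc

lemma traceCondExp_mem (m : Matrix n n ℂ) : traceCondExp S m ∈ S :=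
  (traceCondExp_eq_iff.mp rfl).1

lemma trace_star_sub_traceCondExp_mul (m : Matrix n n ℂ) {c : Matrix n n ℂ} (hc : c ∈ S) :
    trace (star (m - traceCondExp S m) * c) = 0 :=
  (traceCondExp_eq_iff.mp rfl).2 c hc

lemma traceCondExp_of_mem (hm : m ∈ S) : traceCondExp S m = m :=
  traceCondExp_eq_iff.mpr ⟨hm, fun c _ => by simp⟩

lemma traceCondExp_mul_left {b : Matrix n n ℂ} (hb : b ∈ S) (m : Matrix n n ℂ) :
    traceCondExp S (b * m) = b * traceCondExp S m := by
  refine traceCondExp_eq_iff.mpr ⟨mul_mem hb (traceCondExp_mem m), fun c hc => ?_⟩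
  rw [← mul_sub, star_mul, mul_assoc]
  exact trace_star_sub_traceCondExp_mul m (mul_mem (star_mem hb) hc)

lemma traceCondExp_mul_right {b : Matrix n n ℂ} (hb : b ∈ S) (m : Matrix n n ℂ) :
    traceCondExp S (m * b) = traceCondExp S m * b := by
  refine traceCondExp_eq_iff.mpr ⟨mul_mem (traceCondExp_mem m) hb, fun c hc => ?_⟩
  rw [← sub_mul, star_mul, mul_assoc, trace_mul_comm, mul_assoc]
  exact trace_star_sub_traceCondExp_mul m (mul_mem hc (star_mem hb))

end Matrix

section Orbits

open Matrix
open scoped Matrix.Norms.L2Operator MatrixOrder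

variable {N : ℕ} {B2 B : StarSubalgebra ℂ (MatN N)}

lemma imagesEquiv_of_orbitRel {u u' : MatN N} (h : orbitRel B2 B u u') :
    imagesEquiv B2 B u u' := by
  obtain ⟨w, v, hw, hwB, hv, hvB2, rfl⟩ := h
  refine ⟨v, hv, hvB2, ?_⟩
  conv_rhs => rw [← hwB]
  simp only [Set.image_image, star_mul, star_star, mul_assoc,
    Unitary.star_mul_self_mul_of_mem hw]

lemma orbitRel_of_imagesEquiv {u u' : MatN N} (hu : u ∈ unitary (MatN N))
    (hu' : u' ∈ unitary (MatN N)) (h : imagesEquiv B2 B u u') : orbitRel B2 B u u' := by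
  obtain ⟨v, hv, hvB2, hvB⟩ := h
  refine ⟨u' * v * star u, v, mul_mem (mul_mem hu' hv) (Unitary.star_mem hu), ?_, hv, hvB2, ?_⟩
  · calc (fun x => u' * v * star u * x * star (u' * v * star u)) '' (B : Set (MatN N))
        = (fun x => u' * x * star u') ''
            ((fun x => v * x * star v) '' ((fun x => star u * x * u) '' B)) := by
          simp only [Set.image_image, star_mul, star_star, mul_assoc]
      _ = B := by
          rw [hvB, Set.image_image]
          simp only [mul_assoc, Unitary.mul_star_self_mul_of_mem hu',
            Unitary.mul_star_self_of_mem hu', mul_one, Set.image_id']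
  · simp only [mul_assoc, Unitary.star_mul_self_of_mem hu, Unitary.mul_star_self_of_mem hv,
      mul_one]

lemma isCompact_Yset : IsCompact (Yset B2 B) := by
  have hB2 : IsClosed (B2 : Set (MatN N)) :=
    B2.toSubalgebra.toSubmodule.closed_of_finiteDimensional
  have hY : Yset B2 B = (unitary (MatN N) : Set (MatN N)) ∩ ⋂ b ∈ (B : Set (MatN N)),
      (fun u => star u * b * u) ⁻¹' B2 := by
    ext; simp [Yset]
  rw [hY]
  exact isCompact_unitary.inter_right <| isClosed_biInter fun b _ =>
    hB2.preimage (by fun_prop : Continuous fun u : MatN N => star u * b * u)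

lemma traceCondExp_star_mul_intertwines {t u b : MatN N} (ht : t ∈ Yset B2 B)
    (hu : u ∈ Yset B2 B) (hb : b ∈ B) :
    (star t * b * t) * traceCondExp B2 (star t * u) =
      traceCondExp B2 (star t * u) * (star u * b * u) := by
  rw [← traceCondExp_mul_left (ht.2 b hb), ← traceCondExp_mul_right (hu.2 b hb)]
  simp only [mul_assoc, Unitary.mul_star_self_mul_of_mem ht.1,
    Unitary.mul_star_self_mul_of_mem hu.1]

lemma imagesEquiv_of_isUnit_traceCondExp {t u : MatN N} (ht : t ∈ Yset B2 B)
    (hu : u ∈ Yset B2 B) (hx : IsUnit (traceCondExp B2 (star t * u))) : imagesEquiv B2 B t u := by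
  have : IsClosed (B2 : Set (MatN N)) := B2.toSubalgebra.toSubmodule.closed_of_finiteDimensional
  set v := polarUnitary (traceCondExp B2 (star t * u))
  have hv : v ∈ unitary (MatN N) := hx.polarUnitary_mem_unitary
  have hvB : ∀ b ∈ B, (star t * b * t) * v = v * (star u * b * u) := fun b hb =>
    polarUnitary_intertwines (traceCondExp_star_mul_intertwines ht hu hb)
      (by simpa [mul_assoc] using traceCondExp_star_mul_intertwines ht hu (star_mem hb))
  refine ⟨star v, Unitary.star_mem hv, star_mem (polarUnitary_mem (traceCondExp_mem _)), ?_⟩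
  rw [Set.image_image]
  refine Set.image_congr fun b hb => ?_
  rw [star_star, mul_assoc, hvB b hb, ← mul_assoc, Unitary.star_mul_self_of_mem hv, one_mul]

lemma setOf_isUnit_traceCondExp_mem_nhds {t : MatN N} (ht : t ∈ unitary (MatN N)) :
    {u : MatN N | IsUnit (traceCondExp B2 (star t * u))} ∈ 𝓝 t := by
  refine (Units.isOpen.preimage ?_).mem_nhds ?_
  · exact (traceCondExp B2).continuous_of_finiteDimensional.comp (by fun_prop)
  · simp [Unitary.star_mul_self_of_mem ht, traceCondExp_of_mem (one_mem B2)]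

end Orbits

theorem finitely_many_orbits_on_Y_general (N : ℕ)
    (B2 B : StarSubalgebra ℂ (MatN N)) :
    (∀ u ∈ Yset B2 B, ∀ u' ∈ Yset B2 B,
      (orbitRel B2 B u u' ↔ imagesEquiv B2 B u u')) ∧
    ∃ T : Finset (MatN N), (T : Set (MatN N)) ⊆ Yset B2 B ∧
      ∀ u ∈ Yset B2 B, ∃ t ∈ T, orbitRel B2 B t u := by
  refine ⟨fun u hu u' hu' => ⟨imagesEquiv_of_orbitRel, orbitRel_of_imagesEquiv hu.1 hu'.1⟩, ?_⟩
  obtain ⟨T, hTY, hcover⟩ := isCompact_Yset.elim_nhds_subcover _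
    fun t (ht : t ∈ Yset B2 B) => setOf_isUnit_traceCondExp_mem_nhds (B2 := B2) ht.1
  refine ⟨T, hTY, fun u hu => ?_⟩
  obtain ⟨t, htT, htu⟩ := Set.mem_iUnion₂.mp (hcover hu)
  exact ⟨t, htT, orbitRel_of_imagesEquiv (hTY t htT).1 hu.1
    (imagesEquiv_of_isUnit_traceCondExp (hTY t htT) hu htu)⟩

/-- The action of `Stab(M_N,B) × U(B2)` on `Y(B2;B)` has finitely many orbits: the map
sending the orbit of `u` to the `∼_{B2}`-class of `u* B u` is a well-defined injection into
the finite set of `∼_{B2}`-classes of unital C*-subalgebras of `B2`. -/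
theorem finitely_many_orbits_on_Y (N : ℕ) (hN : 0 < N)
    (B2 B : StarSubalgebra ℂ (MatN N)) (hY : (Yset B2 B).Nonempty) :
    (∀ u ∈ Yset B2 B, ∀ u' ∈ Yset B2 B,
      (orbitRel B2 B u u' ↔ imagesEquiv B2 B u u')) ∧
    ∃ T : Finset (MatN N), (T : Set (MatN N)) ⊆ Yset B2 B ∧
      ∀ u ∈ Yset B2 B, ∃ t ∈ T, orbitRel B2 B t u :=
  finitely_many_orbits_on_Y_general N B2 B
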